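/- (Characterization of optimal extractors, Proposition 3.) Let α > 0 and β > 0. For an extractor E : 𝒳 → ℱ, the lower bound of the virtual value function is attained, i.e. 𝒱(E) = H(Y|X) − α·H(Z|π_E(X)) − β·H(V|π_E(X)), if and only if the following three equalities hold: H(Y|E(X)) = H(Y|X), H(Z|(E(X),π_E(X))) = H(Z|π_E(X)), and H(V|(E(X),π_E(X))) = H(V|π_E(X)). -/

import Mathlib

open scoped BigOperators

/-- Marginal of a joint pmf on the first coordinate: `q_X(x) = ∑ w q(x,w)`. -/
noncomputable def margX {X W : Type*} [Fintype W] (q : X × W → ℝ) (x : X) : ℝ :=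
  ∑ w, q (x, w)

open Classical in
/-- `Pr[f = a, W = w] = ∑_{x : f x = a} q(x,w)`. -/
noncomputable def jointPr {X W A : Type*} [Fintype X] (q : X × W → ℝ)
    (f : X → A) (a : A) (w : W) : ℝ :=
  ∑ x ∈ Finset.univ.filter (fun x => f x = a), q (x, w)

open Classical in
/-- `Pr[f = a] = ∑_{x : f x = a} q_X(x)`. -/
noncomputable def featPr {X W A : Type*} [Fintype X] [Fintype W] (q : X × W → ℝ)
    (f : X → A) (a : A) : ℝ :=
  ∑ x ∈ Finset.univ.filter (fun x => f x = a), margX q x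

open Classical in
/-- Conditional entropy `H(W | f(X))`, natural logarithm, with the convention that
summands with `Pr[f=a, W=w] = 0` contribute `0` (automatic since `-0 * log _ = 0`). -/
noncomputable def condEnt {X W A : Type*} [Fintype X] [Fintype W] (q : X × W → ℝ)
    (f : X → A) : ℝ :=
  ∑ a ∈ Finset.univ.image f, ∑ w,
    -(jointPr q f a w) * Real.log (jointPr q f a w / featPr q f a)

/-- `-log t` valued in `(-∞, ∞]`, with the convention `-log 0 = +∞`. -/
noncomputable def negLog (t : ℝ) : EReal := if t = 0 then ⊤ else ((-(Real.log t) : ℝ) : EReal)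

/-- Cross-entropy loss `∑_{x,w} q(x,w) · (-log P(Φ(x))(w))`, valued in `(-∞, ∞]`. -/
noncomputable def condLoss {X W G : Type*} [Fintype X] [Fintype W] (q : X × W → ℝ)
    (Φ : X → G) (P : G → W → ℝ) : EReal :=
  ∑ x, ∑ w, (q (x, w) : EReal) * negLog (P (Φ x) w)

/-- A conditional probability mass function on labels `W` with feature space `G`. -/
def IsCondPMF {G W : Type*} [Fintype W] (P : G → W → ℝ) : Prop :=
  (∀ g w, 0 ≤ P g w) ∧ ∀ g, ∑ w, P g w = 1

open Classical in
/-- The posterior predictor: `Pr[Φ=g, W=w]/Pr[Φ=g]` on features of positive probability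
in the image of `Φ`, and the uniform distribution on `W` otherwise. -/
noncomputable def posteriorPred {X W G : Type*} [Fintype X] [Fintype W] (q : X × W → ℝ)
    (Φ : X → G) (g : G) (w : W) : ℝ :=
  if g ∈ Set.range Φ ∧ 0 < featPr q Φ g then jointPr q Φ g w / featPr q Φ g
  else 1 / Fintype.card W

/-- The posterior map `π(x)(w) = q(x,w)/q_X(x)`. -/
noncomputable def postMap {X W : Type*} [Fintype W] (q : X × W → ℝ) (x : X) : W → ℝ :=
  fun w => q (x, w) / margX q x

/-- Two-variable marginal `q_{XY}` of a pmf on `X × Y × Z × V`. -/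
noncomputable def qXY {X Y Z V : Type*} [Fintype Z] [Fintype V]
    (q : X × Y × Z × V → ℝ) : X × Y → ℝ :=
  fun p => ∑ z, ∑ v, q (p.1, p.2, z, v)

/-- Two-variable marginal `q_{XZ}` of a pmf on `X × Y × Z × V`. -/
noncomputable def qXZ {X Y Z V : Type*} [Fintype Y] [Fintype V]
    (q : X × Y × Z × V → ℝ) : X × Z → ℝ :=
  fun p => ∑ y, ∑ v, q (p.1, y, p.2, v)

/-- Two-variable marginal `q_{XV}` of a pmf on `X × Y × Z × V`. -/
noncomputable def qXV {X Y Z V : Type*} [Fintype Y] [Fintype Z]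
    (q : X × Y × Z × V → ℝ) : X × V → ℝ :=
  fun p => ∑ y, ∑ z, q (p.1, y, z, p.2)

/-- The posterior feature of an extractor `E`:
`π_E(x)(y) = Pr[E = E(x), Y = y] / Pr[E = E(x)]`. -/
noncomputable def postFeat {X Y F : Type*} [Fintype X] [Fintype Y] (qxy : X × Y → ℝ)
    (E : X → F) (x : X) : Y → ℝ :=
  fun y => jointPr qxy E (E x) y / featPr qxy E (E x)

/-- The virtual value function
`𝒱(E) = H(Y|E(X)) - α·H(Z|(E(X),π_E(X))) - β·H(V|(E(X),π_E(X)))`. -/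
noncomputable def virtVal {X Y Z V F : Type*}
    [Fintype X] [Fintype Y] [Fintype Z] [Fintype V]
    (α β : ℝ) (q : X × Y × Z × V → ℝ) (E : X → F) : ℝ :=
  condEnt (qXY q) E
    - α * condEnt (qXZ q) (fun x => (E x, postFeat (qXY q) E x))
    - β * condEnt (qXV q) (fun x => (E x, postFeat (qXY q) E x))

/-! Refining the feature map can only lower a conditional entropy: for `h ∘ g`, each fibre of
`h` merges several fibres of `g`, and the log-sum inequality bounds the merged summand by the
sum of the separate ones. Hence `H(Y|X) ≤ H(Y|E(X))` and `H(W|(E(X),π_E(X))) ≤ H(W|π_E(X))`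
for `W = Z, V`, so `𝒱(E)` dominates the lower bound term by term, and since `α, β > 0` it
attains it exactly when all three inequalities are equalities. -/

open Finset Real

theorem sum_mul_log_div_sum_le {ι : Type*} (s : Finset ι) {a b : ι → ℝ}
    (ha : ∀ i ∈ s, 0 ≤ a i) (hb : ∀ i ∈ s, 0 < b i) :
    (∑ i ∈ s, a i) * log ((∑ i ∈ s, a i) / ∑ i ∈ s, b i) ≤ ∑ i ∈ s, a i * log (a i / b i) := by
  rcases s.eq_empty_or_nonempty with rfl | hs
  · simp
  set A := ∑ i ∈ s, a i
  set B := ∑ i ∈ s, b i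
  have hB : 0 < B := sum_pos hb hs
  have hJensen := convexOn_mul_log.map_sum_le (t := s) (w := fun i => b i / B)
    (p := fun i => a i / b i) (fun i hi => div_nonneg (hb i hi).le hB.le)
    (by rw [← sum_div, div_self hB.ne'])
    (fun i hi => Set.mem_Ici.2 (div_nonneg (ha i hi) (hb i hi).le))
  simp only [smul_eq_mul] at hJensen
  have hmean : ∑ i ∈ s, b i / B * (a i / b i) = A / B := by
    rw [sum_div]
    refine sum_congr rfl fun i hi => ?_
    field_simp [(hb i hi).ne']
  have hvalue : ∑ i ∈ s, b i / B * (a i / b i * log (a i / b i))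
      = (∑ i ∈ s, a i * log (a i / b i)) / B := by
    rw [sum_div]
    refine sum_congr rfl fun i hi => ?_
    field_simp [(hb i hi).ne']
  rw [hmean, hvalue, le_div_iff₀ hB] at hJensen
  calc A * log (A / B) = A / B * log (A / B) * B := by field_simp
    _ ≤ ∑ i ∈ s, a i * log (a i / b i) := hJensen

open Classical in
theorem sum_filter_comp_eq_sum_fiberwise {X A B M : Type*} [Fintype X] [AddCommMonoid M]
    (g : X → A) (h : A → B) (b : B) (r : X → M) :
    ∑ x ∈ univ.filter (fun x => h (g x) = b), r x
      = ∑ a ∈ (univ.image g).filter (fun a => h a = b),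
          ∑ x ∈ univ.filter (fun x => g x = a), r x := by
  rw [← sum_fiberwise_of_maps_to (g := g) (t := (univ.image g).filter (fun a => h a = b))
    (fun x hx => by simpa using hx)]
  refine sum_congr rfl fun a ha => sum_congr ?_ fun _ _ => rfl
  ext x
  simp only [filter_filter, mem_filter, mem_univ, true_and, and_iff_right_iff_imp]
  rintro rfl
  exact (mem_filter.1 ha).2

section Fibres

variable {X W A B : Type*} [Fintype X] (q : X × W → ℝ)

open Classical in
theorem jointPr_comp (g : X → A) (h : A → B) (b : B) (w : W) :
    jointPr q (h ∘ g) b w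
      = ∑ a ∈ (univ.image g).filter (fun a => h a = b), jointPr q g a w :=
  sum_filter_comp_eq_sum_fiberwise g h b fun x => q (x, w)

open Classical in
theorem featPr_comp [Fintype W] (g : X → A) (h : A → B) (b : B) :
    featPr q (h ∘ g) b = ∑ a ∈ (univ.image g).filter (fun a => h a = b), featPr q g a :=
  sum_filter_comp_eq_sum_fiberwise g h b (margX q)

open Classical in
theorem featPr_pos_of_mem_image [Fintype W] (hm : ∀ x, 0 < margX q x) (g : X → A) {a : A}
    (ha : a ∈ univ.image g) : 0 < featPr q g a := by
  obtain ⟨x, -, rfl⟩ := mem_image.1 ha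
  exact sum_pos (fun x _ => hm x) ⟨x, by simp⟩

theorem jointPr_nonneg (hq : ∀ p, 0 ≤ q p) (g : X → A) (a : A) (w : W) :
    0 ≤ jointPr q g a w :=
  sum_nonneg fun _ _ => hq _

open Classical in
theorem condEnt_le_condEnt_comp [Fintype W] (hq : ∀ p, 0 ≤ q p) (hm : ∀ x, 0 < margX q x)
    (g : X → A) (h : A → B) : condEnt q g ≤ condEnt q (h ∘ g) := by
  unfold condEnt
  rw [← sum_fiberwise_of_maps_to (g := h) (t := univ.image (h ∘ g))
    (fun a ha => by obtain ⟨x, -, rfl⟩ := mem_image.1 ha; exact mem_image_of_mem _ (mem_univ x))]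
  refine sum_le_sum fun b _ => ?_
  rw [sum_comm]
  refine sum_le_sum fun w _ => ?_
  rw [jointPr_comp, featPr_comp]
  simp only [neg_mul, sum_neg_distrib, neg_le_neg_iff]
  exact sum_mul_log_div_sum_le _ (fun a _ => jointPr_nonneg q hq g a w)
    (fun a ha => featPr_pos_of_mem_image q hm g (mem_filter.1 ha).1)

end Fibres

theorem margX_qXZ {X Y Z V : Type*} [Fintype Y] [Fintype Z] [Fintype V]
    (q : X × Y × Z × V → ℝ) (x : X) : margX (qXZ q) x = margX (qXY q) x :=
  sum_comm

theorem margX_qXV {X Y Z V : Type*} [Fintype Y] [Fintype Z] [Fintype V]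
    (q : X × Y × Z × V → ℝ) (x : X) : margX (qXV q) x = margX (qXY q) x := by
  unfold margX qXV qXY
  rw [sum_comm]
  exact sum_congr rfl fun _ _ => sum_comm

theorem sub_mul_sub_mul_eq_iff_of_le {a a' b b' c c' α β : ℝ} (hα : 0 < α) (hβ : 0 < β)
    (ha : a' ≤ a) (hb : b ≤ b') (hc : c ≤ c') :
    a - α * b - β * c = a' - α * b' - β * c' ↔ a = a' ∧ b = b' ∧ c = c' := by
  refine ⟨fun h => ?_, by rintro ⟨rfl, rfl, rfl⟩; rfl⟩
  have hαb := mul_le_mul_of_nonneg_left hb hα.le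
  have hβc := mul_le_mul_of_nonneg_left hc hβ.le
  exact ⟨by linarith, mul_left_cancel₀ hα.ne' (by linarith),
    mul_left_cancel₀ hβ.ne' (by linarith)⟩

theorem statement7_general {X Y Z V F : Type*}
    [Fintype X] [Fintype Y]
    [Fintype Z] [Fintype V]
    (α β : ℝ) (hα : 0 < α) (hβ : 0 < β)
    (q : X × Y × Z × V → ℝ) (hq0 : ∀ p, 0 ≤ q p)
    (hqX : ∀ x, 0 < margX (qXY q) x) (E : X → F) :
    virtVal α β q E
      = condEnt (qXY q) id
        - α * condEnt (qXZ q) (postFeat (qXY q) E)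
        - β * condEnt (qXV q) (postFeat (qXY q) E)
    ↔ (condEnt (qXY q) E = condEnt (qXY q) id
       ∧ condEnt (qXZ q) (fun x => (E x, postFeat (qXY q) E x))
           = condEnt (qXZ q) (postFeat (qXY q) E)
       ∧ condEnt (qXV q) (fun x => (E x, postFeat (qXY q) E x))
           = condEnt (qXV q) (postFeat (qXY q) E)) := by
  let EπE : X → F × (Y → ℝ) := fun x => (E x, postFeat (qXY q) E x)
  have hY : condEnt (qXY q) id ≤ condEnt (qXY q) E :=
    condEnt_le_condEnt_comp _ (fun _ => sum_nonneg fun _ _ => sum_nonneg fun _ _ => hq0 _)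
      hqX id E
  have hZ : condEnt (qXZ q) EπE ≤ condEnt (qXZ q) (postFeat (qXY q) E) :=
    condEnt_le_condEnt_comp _ (fun _ => sum_nonneg fun _ _ => sum_nonneg fun _ _ => hq0 _)
      (fun x => margX_qXZ q x ▸ hqX x) EπE Prod.snd
  have hV : condEnt (qXV q) EπE ≤ condEnt (qXV q) (postFeat (qXY q) E) :=
    condEnt_le_condEnt_comp _ (fun _ => sum_nonneg fun _ _ => sum_nonneg fun _ _ => hq0 _)
      (fun x => margX_qXV q x ▸ hqX x) EπE Prod.snd
  exact sub_mul_sub_mul_eq_iff_of_le hα hβ hY hZ hV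

/-- Characterization of optimal extractors: the lower bound of the
virtual value function is attained iff `H(Y|E(X)) = H(Y|X)`,
`H(Z|(E(X),π_E(X))) = H(Z|π_E(X))` and `H(V|(E(X),π_E(X))) = H(V|π_E(X))`. -/
theorem statement7 {X Y Z V F : Type*}
    [Fintype X] [Nonempty X] [Fintype Y] [Nonempty Y]
    [Fintype Z] [Nonempty Z] [Fintype V] [Nonempty V]
    (α β : ℝ) (hα : 0 < α) (hβ : 0 < β)
    (q : X × Y × Z × V → ℝ) (hq0 : ∀ p, 0 ≤ q p) (hq1 : ∑ p, q p = 1)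
    (hqX : ∀ x, 0 < margX (qXY q) x) (E : X → F) :
    virtVal α β q E
      = condEnt (qXY q) id
        - α * condEnt (qXZ q) (postFeat (qXY q) E)
        - β * condEnt (qXV q) (postFeat (qXY q) E)
    ↔ (condEnt (qXY q) E = condEnt (qXY q) id
       ∧ condEnt (qXZ q) (fun x => (E x, postFeat (qXY q) E x))
           = condEnt (qXZ q) (postFeat (qXY q) E)
       ∧ condEnt (qXV q) (fun x => (E x, postFeat (qXY q) E x))
           = condEnt (qXV q) (postFeat (qXY q) E)) :=
  statement7_general α β hα hβ q hq0 hqX E
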